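/- Let E be a standard Borel space, let κ be a Markov kernel from E to E, let x₀ ∈ E, and let ℙ denote the law on E^ℕ of the time-homogeneous Markov chain (X_n)_{n≥0} with X_0 = x₀ and one-step transition kernel κ (the Ionescu–Tulcea trajectory measure), where X_n is the n-th coordinate map. Let E₀, F ⊆ E be measurable sets, let m ≥ 1 be a natural number and λ > 0 a real number, and assume the m-step kernel κ^m satisfies κ^m(x, F) ≥ λ for every x ∈ E₀. Then ℙ-almost surely, if X_n ∈ E₀ for infinitely many n, then X_n ∈ F for infinitely many n; that is, ℙ({X_n ∈ E₀ for infinitely many n} \ {X_n ∈ F for infinitely many n}) = 0. -/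

import Mathlib

open MeasureTheory ProbabilityTheory Set

/-- The `k`-step kernel: the `k`-fold composition of `κ` with itself. -/
noncomputable def kernelPow {E : Type*} [MeasurableSpace E] (κ : Kernel E E) :
    ℕ → Kernel E E
  | 0 => Kernel.id
  | n + 1 => κ ∘ₖ kernelPow κ n

/-- The σ-algebra on trajectories generated by the coordinates `0, …, n`. -/
def trajFiltration (E : Type*) [MeasurableSpace E] (n : ℕ) : MeasurableSpace (ℕ → E) :=
  MeasurableSpace.comap (fun ω (i : Fin (n + 1)) => ω i) inferInstance

/-!
Fix `K` and look at trajectories that visit `E₀` infinitely often but never visit `F`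
after time `K`. Along such a trajectory pick successive visits `t₁ < t₂ < ⋯` to `E₀` after `K`,
each at least `m` steps after the previous one. By the `m`-step Markov property, given the past up
to a visit `tᵣ ∈ E₀`, the chain avoids `F` at time `tᵣ + m` with probability at most `1 - λ`.
Hence the probability of reaching an `r`-th such visit with no `F`-visit in between is at most
`(1 - λ)^(r-1)`, and letting `r → ∞` the event has probability zero; a countable union over `K`
finishes the proof.
-/

instance {E : Type*} [MeasurableSpace E] (κ : Kernel E E) [IsMarkovKernel κ] (m : ℕ) :
    IsMarkovKernel (kernelPow κ m) := by
  induction m with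
  | zero => exact inferInstanceAs (IsMarkovKernel (Kernel.id : Kernel E E))
  | succ n ih => exact inferInstanceAs (IsMarkovKernel (κ ∘ₖ kernelPow κ n))

section trajFiltration

variable {E : Type*} [MeasurableSpace E]

lemma measurable_eval_trajFiltration {j t : ℕ} (h : j ≤ t) :
    Measurable[trajFiltration E t] (fun ω : ℕ → E => ω j) :=
  (measurable_pi_apply (⟨j, Nat.lt_succ_of_le h⟩ : Fin (t + 1))).comp
    (comap_measurable (fun (ω : ℕ → E) (i : Fin (t + 1)) => ω i))

lemma trajFiltration_le (t : ℕ) :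
    trajFiltration E t ≤ (inferInstance : MeasurableSpace (ℕ → E)) :=
  (measurable_pi_lambda _ fun i : Fin (t + 1) => measurable_pi_apply (i : ℕ)).comap_le

lemma trajFiltration_mono {s t : ℕ} (h : s ≤ t) : trajFiltration E s ≤ trajFiltration E t :=
  (@measurable_pi_lambda _ _ _ (trajFiltration E t) _ _ fun i : Fin (s + 1) =>
    measurable_eval_trajFiltration (by omega : (i : ℕ) ≤ t)).comap_le

lemma measurableSet_trajFiltration_forall_notMem {A : Set E} (hA : MeasurableSet A)
    {I : Set ℕ} {t : ℕ} (hI : I ⊆ Iic t) :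
    MeasurableSet[trajFiltration E t] {ω : ℕ → E | ∀ j ∈ I, ω j ∉ A} := by
  simp only [ofPred_forall]
  refine MeasurableSet.iInter fun j => MeasurableSet.iInter fun hj => ?_
  exact measurable_eval_trajFiltration (hI hj) hA.compl

end trajFiltration

def HasMarkovProperty {E : Type*} [MeasurableSpace E] (κ : Kernel E E) (P : Measure (ℕ → E)) :
    Prop :=
  ∀ (n : ℕ) (S : Set (ℕ → E)), MeasurableSet[trajFiltration E n] S →
    ∀ (A : Set E), MeasurableSet A → P (S ∩ {ω | ω (n + 1) ∈ A}) = ∫⁻ ω in S, κ (ω n) A ∂P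

namespace HasMarkovProperty

variable {E : Type*} [MeasurableSpace E] {κ : Kernel E E} {P : Measure (ℕ → E)}

lemma measure_inter_eval_add (hP : HasMarkovProperty κ P) (k : ℕ) {n : ℕ} {S : Set (ℕ → E)}
    (hS : MeasurableSet[trajFiltration E n] S) {A : Set E} (hA : MeasurableSet A) :
    P (S ∩ {ω | ω (n + k) ∈ A}) = ∫⁻ ω in S, kernelPow κ k (ω n) A ∂P := by
  induction k generalizing A with
  | zero =>
    have hT : MeasurableSet {ω : ℕ → E | ω n ∈ A} := measurable_pi_apply n hA
    have hind : (fun ω : ℕ → E => kernelPow κ 0 (ω n) A) = {ω | ω n ∈ A}.indicator 1 := by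
      ext ω
      simp only [kernelPow, Kernel.id_apply, Measure.dirac_apply' _ hA]
      rfl
    rw [hind, lintegral_indicator_one hT, Measure.restrict_apply hT, inter_comm, Nat.add_zero]
  | succ k ih =>
    have hX : Measurable (fun ω : ℕ → E => ω (n + k)) := measurable_pi_apply _
    have hker : Measurable (fun ω : ℕ → E => kernelPow κ k (ω n)) :=
      (kernelPow κ k).measurable.comp (measurable_pi_apply n)
    have hκA := κ.measurable_coe hA
    have hlaw : (P.restrict S).map (fun ω => ω (n + k)) =
        (P.restrict S).bind (fun ω => kernelPow κ k (ω n)) := by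
      ext B hB
      rw [Measure.map_apply hX hB, Measure.bind_apply hB hker.aemeasurable,
        Measure.restrict_apply (hX hB), inter_comm]
      exact ih hB
    calc P (S ∩ {ω | ω (n + (k + 1)) ∈ A})
        = ∫⁻ ω in S, κ (ω (n + k)) A ∂P :=
          hP (n + k) S (trajFiltration_mono (Nat.le_add_right n k) S hS) A hA
      _ = ∫⁻ ω, ∫⁻ y, κ y A ∂(kernelPow κ k (ω n)) ∂(P.restrict S) := by
          rw [← lintegral_map hκA hX, hlaw,
            Measure.lintegral_bind hker.aemeasurable hκA.aemeasurable]
      _ = ∫⁻ ω in S, kernelPow κ (k + 1) (ω n) A ∂P :=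
          lintegral_congr fun ω => (Kernel.comp_apply' _ _ _ hA).symm

lemma measure_inter_eval_add_notMem_le [IsMarkovKernel κ] (hP : HasMarkovProperty κ P)
    {E₀ F : Set E} (hF : MeasurableSet F) {m : ℕ} {ε : ENNReal}
    (hstep : ∀ x ∈ E₀, ε ≤ kernelPow κ m x F) {n : ℕ} {S : Set (ℕ → E)}
    (hS : MeasurableSet[trajFiltration E n] S) (hSE₀ : S ⊆ {ω | ω n ∈ E₀}) :
    P (S ∩ {ω | ω (n + m) ∉ F}) ≤ (1 - ε) * P S :=
  calc P (S ∩ {ω | ω (n + m) ∉ F})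
      = ∫⁻ ω in S, kernelPow κ m (ω n) Fᶜ ∂P := hP.measure_inter_eval_add m hS hF.compl
    _ ≤ ∫⁻ _ in S, (1 - ε) ∂P := by
        refine setLIntegral_mono measurable_const fun ω hω => ?_
        rw [prob_compl_eq_one_sub hF]
        exact tsub_le_tsub_left (hstep _ (hSE₀ hω)) 1
    _ = (1 - ε) * P S := setLIntegral_const _ _

end HasMarkovProperty

section sepVisit

variable {E : Type*} (E₀ F : Set E) (m K : ℕ)

/-- `ω ∈ sepVisit E₀ F m K r t`: starting from time `K` and taking each time the first visit to
`E₀` at least `m` steps after the previous one, the `r`-th visit happens at time `t`, and `ω`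
avoids `F` on `(K, t]`. -/
def sepVisit : ℕ → ℕ → Set (ℕ → E)
  | 0, t => {_ω | t = K}
  | r + 1, t => ⋃ (s : ℕ) (_ : s + m ≤ t), sepVisit r s ∩
      {ω | ω t ∈ E₀ ∧ (∀ j ∈ Ico (s + m) t, ω j ∉ E₀) ∧ ∀ j ∈ Ioc s t, ω j ∉ F}

variable {E₀ F m K}

lemma measurableSet_sepVisit [MeasurableSpace E] (hE₀ : MeasurableSet E₀) (hF : MeasurableSet F)
    (r t : ℕ) :
    MeasurableSet[trajFiltration E t] (sepVisit E₀ F m K r t) := by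
  induction r generalizing t with
  | zero => exact MeasurableSet.const _
  | succ r ih =>
    refine MeasurableSet.iUnion fun s => MeasurableSet.iUnion fun hs => ?_
    refine (trajFiltration_mono (by omega) _ (ih s)).inter ?_
    simp only [ofPred_and]
    exact (measurable_eval_trajFiltration le_rfl hE₀).inter
      ((measurableSet_trajFiltration_forall_notMem hE₀ fun j hj => hj.2.le).inter
        (measurableSet_trajFiltration_forall_notMem hF fun j hj => hj.2))

lemma eval_mem_of_mem_sepVisit_succ {r t : ℕ} {ω : ℕ → E}
    (hω : ω ∈ sepVisit E₀ F m K (r + 1) t) : ω t ∈ E₀ := by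
  simp only [sepVisit, mem_iUnion] at hω
  obtain ⟨_, _, _, hE₀, _⟩ := hω
  exact hE₀

lemma pairwise_disjoint_sepVisit (r : ℕ) :
    Pairwise (Function.onFun Disjoint (sepVisit E₀ F m K r)) := by
  induction r with
  | zero =>
    intro t t' htt'
    simp only [Function.onFun, sepVisit]
    exact disjoint_left.mpr fun _ ht ht' => htt' (ht.trans ht'.symm)
  | succ r ih =>
    refine fun t t' htt' => disjoint_left.mpr fun ω hω hω' => ?_
    simp only [sepVisit, mem_iUnion] at hω hω'
    obtain ⟨s, hs, hωs, htE₀, hnoE₀, -⟩ := hω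
    obtain ⟨s', hs', hωs', ht'E₀, hnoE₀', -⟩ := hω'
    obtain rfl : s = s' := by_contra fun hne => disjoint_left.mp (ih hne) hωs hωs'
    rcases htt'.lt_or_gt with h | h
    · exact hnoE₀' t ⟨hs, h⟩ htE₀
    · exact hnoE₀ t' ⟨hs', h⟩ ht'E₀

lemma sepVisit_succ_subset (hm : 1 ≤ m) (r t : ℕ) :
    sepVisit E₀ F m K (r + 1) t ⊆ ⋃ s, sepVisit E₀ F m K r s ∩ {ω | ω (s + m) ∉ F} := by
  intro ω hω
  simp only [sepVisit, mem_iUnion] at hω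
  obtain ⟨s, hs, hωs, -, -, hnoF⟩ := hω
  exact mem_iUnion.mpr ⟨s, hωs, hnoF (s + m) ⟨by omega, hs⟩⟩

lemma exists_mem_sepVisit {ω : ℕ → E} (hE₀ : ∀ N : ℕ, ∃ n ≥ N, ω n ∈ E₀)
    (hF : ∀ j, K ≤ j → ω j ∉ F) (r : ℕ) : ∃ t, K ≤ t ∧ ω ∈ sepVisit E₀ F m K r t := by
  induction r with
  | zero => exact ⟨K, le_rfl, rfl⟩
  | succ r ih =>
    classical
    obtain ⟨s, hKs, hωs⟩ := ih
    have hex : ∃ n, s + m ≤ n ∧ ω n ∈ E₀ := hE₀ (s + m)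
    obtain ⟨hst, htE₀⟩ := Nat.find_spec hex
    refine ⟨Nat.find hex, hKs.trans (Nat.le_add_right s m |>.trans hst), ?_⟩
    simp only [sepVisit, mem_iUnion]
    exact ⟨s, hst, hωs, htE₀, fun j hj hjE₀ => Nat.find_min hex hj.2 ⟨hj.1, hjE₀⟩,
      fun j hj => hF j (hKs.trans hj.1.le)⟩

end sepVisit

section chain

variable {E : Type*} [MeasurableSpace E] {κ : Kernel E E} [IsMarkovKernel κ]
  {P : Measure (ℕ → E)} [IsProbabilityMeasure P] {E₀ F : Set E} {m : ℕ} {ε : ENNReal}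

lemma measure_iUnion_sepVisit_le (hP : HasMarkovProperty κ P) (hE₀ : MeasurableSet E₀)
    (hF : MeasurableSet F) (hm : 1 ≤ m) (hstep : ∀ x ∈ E₀, ε ≤ kernelPow κ m x F) (K r : ℕ) :
    P (⋃ t, sepVisit E₀ F m K (r + 1) t) ≤ (1 - ε) ^ r := by
  induction r with
  | zero => simpa using prob_le_one
  | succ r ih =>
    have hmeas t : MeasurableSet[trajFiltration E t] (sepVisit E₀ F m K (r + 1) t) :=
      measurableSet_sepVisit hE₀ hF (r + 1) t
    calc P (⋃ t, sepVisit E₀ F m K (r + 1 + 1) t)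
        ≤ P (⋃ s, sepVisit E₀ F m K (r + 1) s ∩ {ω | ω (s + m) ∉ F}) :=
          measure_mono (iUnion_subset fun t => sepVisit_succ_subset hm (r + 1) t)
      _ ≤ ∑' s, P (sepVisit E₀ F m K (r + 1) s ∩ {ω | ω (s + m) ∉ F}) := measure_iUnion_le _
      _ ≤ ∑' s, (1 - ε) * P (sepVisit E₀ F m K (r + 1) s) :=
          ENNReal.tsum_le_tsum fun s => hP.measure_inter_eval_add_notMem_le hF hstep (hmeas s)
            fun _ => eval_mem_of_mem_sepVisit_succ
      _ = (1 - ε) * P (⋃ s, sepVisit E₀ F m K (r + 1) s) := by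
          rw [ENNReal.tsum_mul_left, measure_iUnion (pairwise_disjoint_sepVisit (r + 1))
            fun t => trajFiltration_le t _ (hmeas t)]
      _ ≤ (1 - ε) ^ (r + 1) := by
          rw [pow_succ']
          gcongr

lemma measure_frequently_mem_inter_forall_ge_notMem_eq_zero (hP : HasMarkovProperty κ P)
    (hE₀ : MeasurableSet E₀) (hF : MeasurableSet F) (hm : 1 ≤ m)
    (hstep : ∀ x ∈ E₀, ε ≤ kernelPow κ m x F) (hε : ε ≠ 0) (K : ℕ) :
    P ({ω | ∀ N : ℕ, ∃ n ≥ N, ω n ∈ E₀} ∩ {ω | ∀ j, K ≤ j → ω j ∉ F}) = 0 := by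
  have hle r : P ({ω | ∀ N : ℕ, ∃ n ≥ N, ω n ∈ E₀} ∩ {ω | ∀ j, K ≤ j → ω j ∉ F})
      ≤ (1 - ε) ^ r := by
    refine (measure_mono ?_).trans (measure_iUnion_sepVisit_le hP hE₀ hF hm hstep K r)
    rintro ω ⟨hωE₀, hωF⟩
    obtain ⟨t, -, ht⟩ := exists_mem_sepVisit hωE₀ hωF (r + 1)
    exact mem_iUnion.mpr ⟨t, ht⟩
  have hε1 : 1 - ε < 1 := ENNReal.sub_lt_self ENNReal.one_ne_top one_ne_zero hε
  exact le_antisymm (ge_of_tendsto' (ENNReal.tendsto_pow_atTop_nhds_zero_of_lt_one hε1) hle)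
    zero_le

end chain

theorem stmt8_general
    {E : Type*} [MeasurableSpace E]
    (κ : Kernel E E) [IsMarkovKernel κ]
    (P : Measure (ℕ → E)) [IsProbabilityMeasure P]
    -- … and satisfies the Markov property with transition kernel `κ`
    (hMarkov : ∀ (n : ℕ) (S : Set (ℕ → E)), MeasurableSet[trajFiltration E n] S →
      ∀ (A : Set E), MeasurableSet A →
        P (S ∩ {ω | ω (n + 1) ∈ A}) = ∫⁻ ω in S, κ (ω n) A ∂P)
    (E₀ F : Set E) (hE₀ : MeasurableSet E₀) (hF : MeasurableSet F)
    (m : ℕ) (hm : 1 ≤ m) (lam : ℝ) (hlam : 0 < lam)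
    -- the `m`-step kernel satisfies `κ^m(x, F) ≥ λ` for every `x ∈ E₀`
    (hstep : ∀ x ∈ E₀, ENNReal.ofReal lam ≤ kernelPow κ m x F) :
    -- almost surely, visiting `E₀` infinitely often implies visiting `F` infinitely often
    P ({ω | ∀ N : ℕ, ∃ n ≥ N, ω n ∈ E₀} \ {ω | ∀ N : ℕ, ∃ n ≥ N, ω n ∈ F}) = 0 := by
  have hnull K := measure_frequently_mem_inter_forall_ge_notMem_eq_zero hMarkov hE₀ hF hm hstep
    (ENNReal.ofReal_pos.mpr hlam).ne' K
  refine measure_mono_null (fun ω ⟨hωE₀, hωF⟩ => ?_) (measure_iUnion_null hnull)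
  obtain ⟨K, hK⟩ : ∃ K, ∀ j, K ≤ j → ω j ∉ F := by simpa using hωF
  exact mem_iUnion.mpr ⟨K, hωE₀, hK⟩

theorem stmt8
    {E : Type*} [MeasurableSpace E] [StandardBorelSpace E]
    (κ : Kernel E E) [IsMarkovKernel κ]
    (x₀ : E)
    (P : Measure (ℕ → E)) [IsProbabilityMeasure P]
    -- `P` is the trajectory law of the chain started at `x₀` with one-step kernel `κ`:
    -- the chain starts at `x₀` …
    (hinit : P {ω | ω 0 = x₀} = 1)
    -- … and satisfies the Markov property with transition kernel `κ`
    (hMarkov : ∀ (n : ℕ) (S : Set (ℕ → E)), MeasurableSet[trajFiltration E n] S →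
      ∀ (A : Set E), MeasurableSet A →
        P (S ∩ {ω | ω (n + 1) ∈ A}) = ∫⁻ ω in S, κ (ω n) A ∂P)
    (E₀ F : Set E) (hE₀ : MeasurableSet E₀) (hF : MeasurableSet F)
    (m : ℕ) (hm : 1 ≤ m) (lam : ℝ) (hlam : 0 < lam)
    -- the `m`-step kernel satisfies `κ^m(x, F) ≥ λ` for every `x ∈ E₀`
    (hstep : ∀ x ∈ E₀, ENNReal.ofReal lam ≤ kernelPow κ m x F) :
    -- almost surely, visiting `E₀` infinitely often implies visiting `F` infinitely often
    P ({ω | ∀ N : ℕ, ∃ n ≥ N, ω n ∈ E₀} \ {ω | ∀ N : ℕ, ∃ n ≥ N, ω n ∈ F}) = 0 :=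
  stmt8_general κ P hMarkov E₀ F hE₀ hF m hm lam hlam hstep
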